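/- arXiv:2104.13089 — 3 statements merged into one kernel-verified Lean document; each statement's English description precedes it below -/
import Mathlib

section
/- Let $n,r,k,t$ be positive integers with $n\ge r\ge t+1$ and $k\ge2$. Suppose $\mathcal{F}\subset\mathcal{L}_{n,r,k}$ is a maximal $t$-intersecting family with $\tau_t(\mathcal{F})=t+1$. Let $\mathcal{T}$ be the set of $t$-covers of $\mathcal{F}$ of size $t+1$ and $M=\bigcup_{T\in\mathcal{T}}T$, $\ell=|M|$. If $\mathcal{T}$ has a $t$-cover $S$ of size $t$, then $M\in\mathcal{L}_{n,\ell,k}$ with $t+1\le\ell\le\min\{r+1,n\}$, and every $F\in\mathcal{F}$ not containing $S$ satisfies $|F\cap M|=\ell-1$. -/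
open Finset

attribute [local instance] Classical.propDecidable

/-- The ground set `[n] × [k]`. -/
def box (n k : ℕ) : Finset (ℕ × ℕ) := Finset.Icc 1 n ×ˢ Finset.Icc 1 k

/-- A `k`-signed set on `[n]`: a subset of `[n] × [k]` with pairwise distinct first coordinates. -/
def IsSigned (n k : ℕ) (T : Finset (ℕ × ℕ)) : Prop :=
  T ⊆ box n k ∧ (T.image Prod.fst).card = T.card

/-- `L n r k`: the collection of `k`-signed `r`-sets on `[n]`. -/
def L (n r k : ℕ) : Finset (Finset (ℕ × ℕ)) :=
  (box n k).powerset.filter (fun F => F.card = r ∧ (F.image Prod.fst).card = r)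

/-- A family is `t`-intersecting if any two members meet in at least `t` elements. -/
def IsTIntersecting (t : ℕ) (F : Finset (Finset (ℕ × ℕ))) : Prop :=
  ∀ A ∈ F, ∀ B ∈ F, t ≤ (A ∩ B).card

/-- `T` is a `t`-cover of the family `F`: a `k`-signed set meeting every member in ≥ `t` points. -/
def IsTCover (n k t : ℕ) (F : Finset (Finset (ℕ × ℕ))) (T : Finset (ℕ × ℕ)) : Prop :=
  IsSigned n k T ∧ ∀ A ∈ F, t ≤ (T ∩ A).card

/-- `F` is a maximal `t`-intersecting subfamily of `L n r k`. -/
def IsMaximalTIntersecting (n r k t : ℕ) (F : Finset (Finset (ℕ × ℕ))) : Prop :=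
  F ⊆ L n r k ∧ IsTIntersecting t F ∧
    ∀ G ⊆ L n r k, IsTIntersecting t G → F ⊆ G → G = F

/-- A `t`-intersecting family is trivial if all members contain a fixed `k`-signed `t`-set. -/
def IsTrivial (n k t : ℕ) (F : Finset (Finset (ℕ × ℕ))) : Prop :=
  ∃ T, IsSigned n k T ∧ T.card = t ∧ ∀ A ∈ F, T ⊆ A

/-- `Msig d = {(1,1),(2,1),…,(d,1)}`. -/
def Msig (d : ℕ) : Finset (ℕ × ℕ) := (Finset.Icc 1 d).image (fun x => (x, 1))

/-- The family `H₁(n,r,k,ℓ,t)`. -/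
def H1 (n r k l t : ℕ) : Finset (Finset (ℕ × ℕ)) :=
  (L n r k).filter (fun F =>
    (Msig t ⊆ F ∧ t + 1 ≤ (F ∩ Msig l).card) ∨
    (¬ Msig t ⊆ F ∧ (F ∩ Msig l).card = l - 1))

/-- The family `H₂(n,r,k,c,t)`. -/
def H2 (n r k c t : ℕ) : Finset (Finset (ℕ × ℕ)) :=
  (L n r k).filter (fun F =>
    (Msig t ⊆ F ∧ t + 1 ≤ (F ∩ Msig r).card) ∨
    (F ∩ Msig r = Msig t ∧ Msig c \ Msig r ⊆ F) ∨
    (¬ Msig t ⊆ F ∧ (F ∩ Msig r).card = r - 1 ∧ (F ∩ (Msig c \ Msig r)).card = 1))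

/-- The set of all `t`-covers of `F` of size `t+1`. -/
noncomputable def TauSet (n k t : ℕ) (F : Finset (Finset (ℕ × ℕ))) : Finset (Finset (ℕ × ℕ)) :=
  (box n k).powerset.filter (fun T => IsTCover n k t F T ∧ T.card = t + 1)

/-!
Since `|S| = t` and `S` meets every `T ∈ 𝒯` of size `t + 1` in `t` points, every such `T` is
`S` plus one point. A member `A` of `F` with `S ⊄ A` meets `S` in at most `t - 1` points but
meets each `S ∪ {x}` in `t`, so `A` contains every `x ∈ M \ S` and misses exactly one point of
`S`: `|A ∩ M| = |M| - 1`. Such an `A` exists because `S` is not itself a `t`-cover of `F`, and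
it bounds `|M| ≤ r + 1`. Two points of `M` lie in a common `T ∈ 𝒯` unless both lie outside
`S`, and then they lie in `A`; either way they have distinct first coordinates.
-/

namespace Finset

variable {α β : Type*} [DecidableEq α] {𝒯 : Finset (Finset α)} {S A : Finset α} {x : α}

theorem subset_of_card_le_card_inter {s u : Finset α} (h : s.card ≤ (s ∩ u).card) : s ⊆ u :=
  inter_eq_left.1 (eq_of_subset_of_card_le inter_subset_left h)

theorem card_inter_lt_of_not_subset (h : ¬ S ⊆ A) : (S ∩ A).card < S.card :=
  lt_of_not_ge fun hle => h (subset_of_card_le_card_inter hle)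

theorem mem_and_card_inter_of_card_le_card_insert_inter (hSA : ¬ S ⊆ A) (hxS : x ∉ S)
    (h : S.card ≤ (insert x S ∩ A).card) : x ∈ A ∧ (S ∩ A).card + 1 = S.card := by
  have hlt := card_inter_lt_of_not_subset hSA
  by_cases hxA : x ∈ A
  · rw [insert_inter_of_mem hxA, card_insert_of_notMem fun hx => hxS (mem_of_mem_inter_left hx)]
      at h
    exact ⟨hxA, by omega⟩
  · rw [insert_inter_of_notMem hxA] at h
    omega

section OnePointExtensions

variable (h𝒯 : ∀ T ∈ 𝒯, S ⊆ T ∧ T.card = S.card + 1)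
include h𝒯

theorem insert_mem_of_mem_sup_sdiff (hx : x ∈ 𝒯.sup id \ S) : insert x S ∈ 𝒯 := by
  obtain ⟨hxM, hxS⟩ := mem_sdiff.1 hx
  obtain ⟨T, hT, hxT⟩ := mem_sup.1 hxM
  have hsub : insert x S ⊆ T := insert_subset hxT (h𝒯 T hT).1
  rwa [eq_of_subset_of_card_le hsub (by rw [card_insert_of_notMem hxS, (h𝒯 T hT).2])]

variable (hA : ∀ T ∈ 𝒯, S.card ≤ (T ∩ A).card) (hSA : ¬ S ⊆ A)
include hA hSA

theorem sup_sdiff_subset : 𝒯.sup id \ S ⊆ A := fun _ hx =>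
  (mem_and_card_inter_of_card_le_card_insert_inter hSA (mem_sdiff.1 hx).2
    (hA _ (insert_mem_of_mem_sup_sdiff h𝒯 hx))).1

theorem card_inter_sup (hne : 𝒯.Nonempty) : (A ∩ 𝒯.sup id).card = (𝒯.sup id).card - 1 := by
  set M := 𝒯.sup id
  obtain ⟨T, hT⟩ := hne
  have hSM : S ⊆ M := (h𝒯 T hT).1.trans (le_sup (f := id) hT)
  obtain ⟨x, hxT, hxS⟩ : ∃ x ∈ T, x ∉ S :=
    exists_mem_notMem_of_card_lt_card (by rw [(h𝒯 T hT).2]; omega)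
  have hx : x ∈ M \ S := mem_sdiff.2 ⟨le_sup (f := id) hT hxT, hxS⟩
  have hSA' := (mem_and_card_inter_of_card_le_card_insert_inter hSA hxS
    (hA _ (insert_mem_of_mem_sup_sdiff h𝒯 hx))).2
  have hMA : M \ A = S \ A := by
    ext y
    simp only [mem_sdiff]
    refine ⟨fun ⟨hyM, hyA⟩ => ⟨?_, hyA⟩, fun ⟨hyS, hyA⟩ => ⟨hSM hyS, hyA⟩⟩
    by_contra hyS
    exact hyA (sup_sdiff_subset h𝒯 hA hSA (mem_sdiff.2 ⟨hyM, hyS⟩))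
  have hM := card_sdiff_add_card_inter M A
  have hS := card_sdiff_add_card_inter S A
  rw [hMA] at hM
  rw [inter_comm]
  omega

end OnePointExtensions

theorem injOn_sup {f : α → β} (h𝒯 : ∀ T ∈ 𝒯, S ⊆ T) (hinj : ∀ T ∈ 𝒯, Set.InjOn f T)
    (hA : Set.InjOn f A) (hMA : 𝒯.sup id \ S ⊆ A) : Set.InjOn f (𝒯.sup id : Finset α) := by
  intro x hx y hy hxy
  simp only [mem_coe] at hx hy
  obtain ⟨T₁, hT₁, hxT₁⟩ := mem_sup.1 hx
  obtain ⟨T₂, hT₂, hyT₂⟩ := mem_sup.1 hy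
  by_cases hyS : y ∈ S
  · exact hinj T₁ hT₁ hxT₁ (h𝒯 T₁ hT₁ hyS) hxy
  by_cases hxS : x ∈ S
  · exact hinj T₂ hT₂ (h𝒯 T₂ hT₂ hxS) hyT₂ hxy
  exact hA (hMA (mem_sdiff.2 ⟨hx, hxS⟩)) (hMA (mem_sdiff.2 ⟨hy, hyS⟩)) hxy

end Finset

section SignedSets

variable {n r k t : ℕ} {F 𝒯 : Finset (Finset (ℕ × ℕ))} {T : Finset (ℕ × ℕ)}

theorem isSigned_iff : IsSigned n k T ↔ T ⊆ box n k ∧ Set.InjOn Prod.fst (T : Set (ℕ × ℕ)) := by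
  rw [IsSigned, card_image_iff]

theorem IsSigned.card_le (h : IsSigned n k T) : T.card ≤ n := by
  have him : T.image Prod.fst ⊆ Icc 1 n := by
    intro a ha
    obtain ⟨x, hx, rfl⟩ := mem_image.1 ha
    exact (mem_product.1 (h.1 hx)).1
  simpa [h.2] using card_le_card him

theorem isSigned_of_mem_L (h : T ∈ L n r k) : IsSigned n k T ∧ T.card = r := by
  simp only [L, mem_filter, mem_powerset] at h
  exact ⟨⟨h.1, by rw [h.2.1, h.2.2]⟩, h.2.1⟩

theorem mem_TauSet : T ∈ TauSet n k t F ↔ IsTCover n k t F T ∧ T.card = t + 1 := by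
  simp only [TauSet, mem_filter, mem_powerset, and_iff_right_iff_imp]
  exact fun h => h.1.1.1

theorem isSigned_sup {A : Finset (ℕ × ℕ)} {S : Finset (ℕ × ℕ)} (h𝒯 : ∀ T ∈ 𝒯, S ⊆ T)
    (hsig : ∀ T ∈ 𝒯, IsSigned n k T) (hA : IsSigned n k A) (hMA : 𝒯.sup id \ S ⊆ A) :
    IsSigned n k (𝒯.sup id) :=
  isSigned_iff.2 ⟨Finset.sup_le fun T hT => (hsig T hT).1,
    injOn_sup h𝒯 (fun T hT => (isSigned_iff.1 (hsig T hT)).2) (isSigned_iff.1 hA).2 hMA⟩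

end SignedSets

theorem union_of_covers_case2_general (n r k t : ℕ)
    (F : Finset (Finset (ℕ × ℕ))) (hF : IsMaximalTIntersecting n r k t F)
    (hex : ∃ T, IsTCover n k t F T ∧ T.card = t + 1)
    (hmin : ∀ T, IsTCover n k t F T → t + 1 ≤ T.card)
    (S : Finset (ℕ × ℕ)) (hS : IsTCover n k t (TauSet n k t F) S) (hSc : S.card = t) :
    IsSigned n k ((TauSet n k t F).sup id) ∧
      t + 1 ≤ ((TauSet n k t F).sup id).card ∧
      ((TauSet n k t F).sup id).card ≤ min (r + 1) n ∧
      ∀ A ∈ F, ¬ S ⊆ A → (A ∩ (TauSet n k t F).sup id).card = ((TauSet n k t F).sup id).card - 1 := by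
  set M := (TauSet n k t F).sup id
  have h𝒯 : ∀ T ∈ TauSet n k t F, S ⊆ T ∧ T.card = S.card + 1 := fun T hT =>
    ⟨subset_of_card_le_card_inter (hSc ▸ hS.2 T hT), hSc ▸ (mem_TauSet.1 hT).2⟩
  obtain ⟨T₀, hT₀⟩ := hex
  have hT₀ : T₀ ∈ TauSet n k t F := mem_TauSet.2 hT₀
  have hmeet : ∀ A ∈ F, ∀ T ∈ TauSet n k t F, S.card ≤ (T ∩ A).card := fun A hA T hT =>
    hSc ▸ (mem_TauSet.1 hT).1.2 A hA
  have hcount : ∀ A ∈ F, ¬ S ⊆ A → (A ∩ M).card = M.card - 1 := fun A hA hSA =>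
    card_inter_sup h𝒯 (hmeet A hA) hSA ⟨T₀, hT₀⟩
  obtain ⟨A₀, hA₀, hSA₀⟩ : ∃ A ∈ F, ¬ S ⊆ A := by
    by_contra! h
    have := hmin S ⟨hS.1, fun A hA => by rw [inter_eq_left.2 (h A hA), hSc]⟩
    omega
  obtain ⟨hA₀sig, hA₀card⟩ := isSigned_of_mem_L (hF.1 hA₀)
  have hMsig : IsSigned n k M :=
    isSigned_sup (fun T hT => (h𝒯 T hT).1) (fun T hT => (mem_TauSet.1 hT).1.1) hA₀sig
      (sup_sdiff_subset h𝒯 (hmeet A₀ hA₀) hSA₀)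
  have hT₀M : T₀.card ≤ M.card := card_le_card (le_sup (f := id) hT₀)
  have hA₀M : (A₀ ∩ M).card ≤ A₀.card := card_le_card inter_subset_left
  have hA₀count := hcount A₀ hA₀ hSA₀
  have hT₀card := (mem_TauSet.1 hT₀).2
  exact ⟨hMsig, by omega, le_min (by omega) hMsig.card_le, hcount⟩

theorem union_of_covers_case2 (n r k t : ℕ) (hn : 0 < n) (ht : 0 < t)
    (hk : 2 ≤ k) (htr : t + 1 ≤ r) (hrn : r ≤ n)
    (F : Finset (Finset (ℕ × ℕ))) (hF : IsMaximalTIntersecting n r k t F)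
    (hex : ∃ T, IsTCover n k t F T ∧ T.card = t + 1)
    (hmin : ∀ T, IsTCover n k t F T → t + 1 ≤ T.card)
    (S : Finset (ℕ × ℕ)) (hS : IsTCover n k t (TauSet n k t F) S) (hSc : S.card = t) :
    IsSigned n k ((TauSet n k t F).sup id) ∧
      t + 1 ≤ ((TauSet n k t F).sup id).card ∧
      ((TauSet n k t F).sup id).card ≤ min (r + 1) n ∧
      ∀ A ∈ F, ¬ S ⊆ A → (A ∩ (TauSet n k t F).sup id).card = ((TauSet n k t F).sup id).card - 1 :=
  union_of_covers_case2_general n r k t F hF hex hmin S hS hSc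
end

section
/- Let $n,r,k,t,c$ be positive integers with $k\ge2$, $t+2\le r\le n$, and $r+2\le c\le\min\{2r-t,n\}$. Then the family $\mathcal{H}_2(n,r,k,c,t)$ is $t$-intersecting. -/
open Finset

attribute [local instance] Classical.propDecidable

/-- The set of all `t`-covers of `F` of size `t+1`. -/

lemma msig_subset_msig {a b : ℕ} (h : a ≤ b) : Msig a ⊆ Msig b :=
  Finset.image_subset_image (Finset.Icc_subset_Icc le_rfl h)

lemma msig_card (d : ℕ) : (Msig d).card = d := by
  rw [Msig, Finset.card_image_of_injective _ (fun a b h => by simpa using h)]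
  simp

lemma inter_card_lb {α : Type*} [DecidableEq α] (S1 S2 M : Finset α)
    (h1 : S1 ⊆ M) (h2 : S2 ⊆ M) :
    S1.card + S2.card ≤ (S1 ∩ S2).card + M.card := by
  rw [← Finset.card_inter_add_card_union]
  exact Nat.add_le_add_left (Finset.card_le_card (Finset.union_subset h1 h2)) _

theorem H2_t_intersecting (n r k t c : ℕ) (hn : 0 < n) (ht : 0 < t)
    (hk : 2 ≤ k) (htr : t + 2 ≤ r) (hrn : r ≤ n)
    (hc1 : r + 2 ≤ c) (hc2 : c ≤ min (2 * r - t) n) :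
    IsTIntersecting t (H2 n r k c t) := by
  intro A hA B hB
  rw [H2, Finset.mem_filter] at hA hB
  obtain ⟨-, hA⟩ := hA
  obtain ⟨-, hB⟩ := hB
  have hsubtr : Msig t ⊆ Msig r := msig_subset_msig (by omega)
  have hboth : ∀ {X Y : Finset (ℕ × ℕ)}, Msig t ⊆ X → Msig t ⊆ Y → t ≤ (X ∩ Y).card := by
    intro X Y h1 h2
    calc t = (Msig t).card := (msig_card t).symm
    _ ≤ _ := Finset.card_le_card (Finset.subset_inter h1 h2)
  have hmr : ∀ X Y : Finset (ℕ × ℕ),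
      (X ∩ Msig r).card + (Y ∩ Msig r).card ≤ (X ∩ Y).card + r := by
    intro X Y
    have h1 := inter_card_lb (X ∩ Msig r) (Y ∩ Msig r) (Msig r)
      Finset.inter_subset_right Finset.inter_subset_right
    have h2 : (X ∩ Msig r) ∩ (Y ∩ Msig r) ⊆ X ∩ Y :=
      Finset.inter_subset_inter Finset.inter_subset_left Finset.inter_subset_left
    have h3 := Finset.card_le_card h2
    have h4 := msig_card r
    omega
  have hbc : ∀ {X Y : Finset (ℕ × ℕ)},
      (X ∩ Msig r = Msig t ∧ Msig c \ Msig r ⊆ X) →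
      (¬ Msig t ⊆ Y ∧ (Y ∩ Msig r).card = r - 1 ∧ (Y ∩ (Msig c \ Msig r)).card = 1) →
      t ≤ (X ∩ Y).card := by
    rintro X Y ⟨hX1, hX2⟩ ⟨-, hY1, hY2⟩
    obtain ⟨p, hp⟩ := Finset.card_eq_one.1 hY2
    have hpmem := Finset.mem_inter.1 (hp ▸ Finset.mem_singleton_self p)
    have hpY : p ∈ Y := hpmem.1
    have hpX : p ∈ X := hX2 hpmem.2
    have hpnr : p ∉ Msig r := (Finset.mem_sdiff.1 hpmem.2).2
    have htX : Msig t ⊆ X := hX1 ▸ Finset.inter_subset_left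
    have hsub : insert p (Msig t ∩ Y) ⊆ X ∩ Y := by
      intro x hx
      rcases Finset.mem_insert.1 hx with rfl | hx
      · exact Finset.mem_inter.2 ⟨hpX, hpY⟩
      · have h := Finset.mem_inter.1 hx
        exact Finset.mem_inter.2 ⟨htX h.1, h.2⟩
    have hpnot : p ∉ Msig t ∩ Y := fun h => hpnr (hsubtr (Finset.mem_inter.1 h).1)
    have hcard : (insert p (Msig t ∩ Y)).card = (Msig t ∩ Y).card + 1 :=
      Finset.card_insert_of_notMem hpnot
    have heq : Msig t ∩ (Y ∩ Msig r) = Msig t ∩ Y := by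
      ext x
      simp only [Finset.mem_inter]
      exact ⟨fun h => ⟨h.1, h.2.1⟩, fun h => ⟨h.1, h.2, hsubtr h.1⟩⟩
    have h1 := inter_card_lb (Msig t) (Y ∩ Msig r) (Msig r) hsubtr Finset.inter_subset_right
    rw [heq] at h1
    have h3 := Finset.card_le_card hsub
    have e1 := msig_card t
    have e2 := msig_card r
    omega
  rcases hA with hA | hA | hA <;> rcases hB with hB | hB | hB
  · exact hboth hA.1 hB.1
  · exact hboth hA.1 (hB.1 ▸ Finset.inter_subset_left)
  · have h := hmr A B
    obtain ⟨-, hA2⟩ := hA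
    obtain ⟨-, hB2, -⟩ := hB
    omega
  · exact hboth (hA.1 ▸ Finset.inter_subset_left) hB.1
  · exact hboth (hA.1 ▸ Finset.inter_subset_left) (hB.1 ▸ Finset.inter_subset_left)
  · exact hbc hA hB
  · have h := hmr A B
    obtain ⟨-, hA2, -⟩ := hA
    obtain ⟨-, hB2⟩ := hB
    omega
  · rw [Finset.inter_comm]
    exact hbc hB hA
  · have h := hmr A B
    obtain ⟨-, hA2, -⟩ := hA
    obtain ⟨-, hB2, -⟩ := hB
    omega
end

section
/- Let $n,r,k,t,a$ be positive integers with $k\ge2$, $t+2\le r\le n$ and $t+2\le a\le n$. For $b\in\{t+1,\dots,a\}$ let $\mathcal{N}_b$ denote the set of $F\in\mathcal{L}_{n,r,k}$ with $M_t\subseteq F$ and $|F\cap M_a|=b$. Then $\sum_{i=2}^{a-t}\binom{i}{2}|\mathcal{N}_{t+i}| = \binom{a-t}{2}\binom{n-t-2}{r-t-2}k^{r-t-2}$. -/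
open Finset

attribute [local instance] Classical.propDecidable

/-! Count the pairs `(e, F)` with `F ∈ L n r k`, `Msig t ⊆ F`, and `e` a two-element subset of
`Msig a \ Msig t` contained in `F`. A member `F` with `|F ∩ Msig a| = t + i` lies in `C(i, 2)`
such pairs. Conversely, each of the `C(a - t, 2)` sets `e` gives the signed `(t + 2)`-set
`Msig t ∪ e`, and the signed `r`-sets containing it arise by choosing `r - t - 2` of the
`n - t - 2` remaining first coordinates and a sign for each. -/

section SignedSets

variable {α β : Type*} [DecidableEq α]

def signedSets (S : Finset α) (K : Finset β) (j : ℕ) : Finset (Finset (α × β)) :=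
  {G ∈ (S ×ˢ K).powerset | #G = j ∧ #(G.image Prod.fst) = j}

theorem mem_signedSets {S : Finset α} {K : Finset β} {j : ℕ} {G : Finset (α × β)} :
    G ∈ signedSets S K j ↔ G ⊆ S ×ˢ K ∧ #G = j ∧ #(G.image Prod.fst) = j := by
  simp only [signedSets, mem_filter, mem_powerset]

theorem card_graphs (A : Finset α) (K : Finset β) :
    #{G ∈ (A ×ˢ K).powerset | G.image Prod.fst = A ∧ #G = #A} = #K ^ #A := by
  rw [← prod_const, ← card_pi]
  have fst_injOn (g : ∀ x ∈ A, β) :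
      Set.InjOn (fun x : A => (x.1, g x.1 x.2)) ↑A.attach := fun x _ y _ h =>
    Subtype.ext (congrArg Prod.fst h)
  refine (card_bij (fun g _ => A.attach.image fun x => (x.1, g x.1 x.2)) ?_ ?_ ?_).symm
  · intro g hg
    simp only [mem_filter, mem_powerset, image_image]
    refine ⟨fun p hp => ?_, attach_image_val, ?_⟩
    · obtain ⟨x, -, rfl⟩ := mem_image.1 hp
      exact mem_product.2 ⟨x.2, mem_pi.1 hg x.1 x.2⟩
    · rw [card_image_of_injOn (fst_injOn g), card_attach]
  · intro g₁ _ g₂ _ h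
    funext x hx
    obtain ⟨y, -, hy⟩ := mem_image.1 (h ▸ mem_image_of_mem _ (mem_attach A ⟨x, hx⟩))
    obtain ⟨rfl, hxy⟩ := Prod.ext_iff.1 hy
    exact hxy.symm
  · intro G hG
    simp only [mem_filter, mem_powerset] at hG
    obtain ⟨hGsub, hGfst, hGcard⟩ := hG
    have hfiber (x) (hx : x ∈ A) : ∃ y, (x, y) ∈ G := by
      obtain ⟨p, hp, rfl⟩ := mem_image.1 (hGfst ▸ hx)
      exact ⟨p.2, hp⟩
    choose g hg using hfiber
    refine ⟨g, mem_pi.2 fun x hx => (mem_product.1 (hGsub (hg x hx))).2, ?_⟩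
    refine eq_of_subset_of_card_le ?_ ?_
    · intro p hp
      obtain ⟨x, -, rfl⟩ := mem_image.1 hp
      exact hg x.1 x.2
    · rw [card_image_of_injOn (fst_injOn g), card_attach, hGcard]

theorem card_signedSets (S : Finset α) (K : Finset β) (j : ℕ) :
    #(signedSets S K j) = (#S).choose j * #K ^ j := by
  have hfst : ∀ G ∈ signedSets S K j, G.image Prod.fst ∈ S.powersetCard j := by
    intro G hG
    obtain ⟨hGsub, -, hGfst⟩ := mem_signedSets.1 hG
    refine mem_powersetCard.2 ⟨fun x hx => ?_, hGfst⟩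
    obtain ⟨p, hp, rfl⟩ := mem_image.1 hx
    exact (mem_product.1 (hGsub hp)).1
  have hfiber : ∀ A ∈ S.powersetCard j, {G ∈ signedSets S K j | G.image Prod.fst = A} =
      {G ∈ (A ×ˢ K).powerset | G.image Prod.fst = A ∧ #G = #A} := by
    intro A hA
    obtain ⟨hAS, rfl⟩ := mem_powersetCard.1 hA
    ext G
    simp only [mem_filter, mem_signedSets, mem_powerset]
    constructor
    · rintro ⟨⟨hGsub, hG, -⟩, rfl⟩
      refine ⟨fun p hp => mem_product.2 ⟨mem_image_of_mem _ hp, (mem_product.1 (hGsub hp)).2⟩,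
        rfl, hG⟩
    · rintro ⟨hGsub, rfl, hG⟩
      exact ⟨⟨hGsub.trans (product_subset_product_left hAS), hG, rfl⟩, rfl⟩
  rw [card_eq_sum_card_fiberwise hfst, sum_congr rfl fun A hA => by
    rw [hfiber A hA, card_graphs, (mem_powersetCard.1 hA).2], sum_const, card_powersetCard,
    smul_eq_mul]

theorem card_filter_superset_signedSets [DecidableEq β] {S : Finset α} {K : Finset β}
    {I : Finset (α × β)} {s r : ℕ} (hI : I ∈ signedSets S K s) (hsr : s ≤ r) :
    #{F ∈ signedSets S K r | I ⊆ F} = #(signedSets (S \ I.image Prod.fst) K (r - s)) := by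
  obtain ⟨hIsub, hIcard, hIfst⟩ := mem_signedSets.1 hI
  have hdisj_fst (G : Finset (α × β)) (hG : G ⊆ (S \ I.image Prod.fst) ×ˢ K) :
      Disjoint (G.image Prod.fst) (I.image Prod.fst) := by
    refine disjoint_left.2 fun x hx => ?_
    obtain ⟨p, hp, rfl⟩ := mem_image.1 hx
    exact (mem_sdiff.1 (mem_product.1 (hG hp)).1).2
  refine card_nbij' (· \ I) (· ∪ I) ?_ ?_ ?_ ?_
  · intro F hF
    simp only [coe_filter, Set.mem_ofPred_eq, mem_coe, mem_signedSets] at hF ⊢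
    obtain ⟨⟨hFsub, hFcard, hFfst⟩, hIF⟩ := hF
    have hinj : Set.InjOn Prod.fst (F : Set (α × β)) :=
      card_image_iff.1 (hFfst.trans hFcard.symm)
    have hfst : (F \ I).image Prod.fst = F.image Prod.fst \ I.image Prod.fst :=
      image_sdiff_of_injOn hinj hIF
    refine ⟨fun p hp => ?_, ?_, ?_⟩
    · have hpfst : p.1 ∈ F.image Prod.fst \ I.image Prod.fst := hfst ▸ mem_image_of_mem _ hp
      exact mem_product.2 ⟨mem_sdiff.2 ⟨(mem_product.1 (hFsub (mem_sdiff.1 hp).1)).1,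
        (mem_sdiff.1 hpfst).2⟩, (mem_product.1 (hFsub (mem_sdiff.1 hp).1)).2⟩
    · rw [card_sdiff_of_subset hIF, hFcard, hIcard]
    · rw [hfst, card_sdiff_of_subset (image_subset_image hIF), hFfst, hIfst]
  · intro G hG
    simp only [coe_filter, Set.mem_ofPred_eq, mem_coe, mem_signedSets] at hG ⊢
    obtain ⟨hGsub, hGcard, hGfst⟩ := hG
    have hdisj : Disjoint G I := (hdisj_fst G hGsub).of_image_finset
    refine ⟨⟨union_subset (hGsub.trans (product_subset_product_left sdiff_subset)) hIsub,
      ?_, ?_⟩, subset_union_right⟩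
    · rw [card_union_of_disjoint hdisj, hGcard, hIcard, Nat.sub_add_cancel hsr]
    · rw [image_union, card_union_of_disjoint (hdisj_fst G hGsub), hGfst, hIfst,
        Nat.sub_add_cancel hsr]
  · intro F hF
    exact sdiff_union_of_subset (mem_filter.1 hF).2
  · intro G hG
    exact union_sdiff_cancel_right (hdisj_fst G (mem_signedSets.1 hG).1).of_image_finset

end SignedSets

section DoubleCounting

variable {α : Type*} [DecidableEq α]

theorem sum_choose_card_inter (X : Finset α) (𝓕 : Finset (Finset α)) (j : ℕ) :
    ∑ F ∈ 𝓕, (#(X ∩ F)).choose j = ∑ e ∈ X.powersetCard j, #{F ∈ 𝓕 | e ⊆ F} := by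
  have hbelow (F : Finset α) : {e ∈ X.powersetCard j | e ⊆ F} = (X ∩ F).powersetCard j := by
    ext e
    simp only [mem_filter, mem_powersetCard, subset_inter_iff]
    tauto
  simpa only [bipartiteAbove, bipartiteBelow, hbelow, card_powersetCard] using
    (sum_card_bipartiteAbove_eq_sum_card_bipartiteBelow (fun e F : Finset α => e ⊆ F)
      (s := X.powersetCard j) (t := 𝓕)).symm

theorem sum_Icc_choose_mul_card_filter_card_inter (X : Finset α) (𝓕 : Finset (Finset α))
    (j : ℕ) :
    ∑ i ∈ Icc j #X, i.choose j * #{F ∈ 𝓕 | #(X ∩ F) = i} =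
      ∑ e ∈ X.powersetCard j, #{F ∈ 𝓕 | e ⊆ F} := by
  have hmaps : ∀ F ∈ 𝓕, #(X ∩ F) ∈ range (#X + 1) := fun F _ =>
    mem_range_succ_iff.2 (card_le_card inter_subset_left)
  calc ∑ i ∈ Icc j #X, i.choose j * #{F ∈ 𝓕 | #(X ∩ F) = i}
      = ∑ i ∈ range (#X + 1), i.choose j * #{F ∈ 𝓕 | #(X ∩ F) = i} := by
        refine sum_subset (fun i hi => mem_range_succ_iff.2 (mem_Icc.1 hi).2) fun i hi hij => ?_
        rw [Nat.choose_eq_zero_of_lt, zero_mul]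
        simp only [mem_range, mem_Icc] at hi hij
        omega
    _ = ∑ F ∈ 𝓕, (#(X ∩ F)).choose j := by
        rw [← sum_fiberwise_of_maps_to hmaps]
        refine sum_congr rfl fun i _ => ?_
        rw [sum_congr rfl fun F hF => by rw [(mem_filter.1 hF).2], sum_const, smul_eq_mul,
          mul_comm]
    _ = ∑ e ∈ X.powersetCard j, #{F ∈ 𝓕 | e ⊆ F} := sum_choose_card_inter X 𝓕 j

end DoubleCounting

theorem L_eq_signedSets (n r k : ℕ) : L n r k = signedSets (Icc 1 n) (Icc 1 k) r := rfl

theorem card_filter_superset_L {n r k s : ℕ} {I : Finset (ℕ × ℕ)} (hI : IsSigned n k I)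
    (hIs : #I = s) (hsr : s ≤ r) :
    #{F ∈ L n r k | I ⊆ F} = (n - s).choose (r - s) * k ^ (r - s) := by
  have hfst : I.image Prod.fst ⊆ Icc 1 n := fun x hx => by
    obtain ⟨p, hp, rfl⟩ := mem_image.1 hx
    exact (mem_product.1 (hI.1 hp)).1
  have hI' : I ∈ signedSets (Icc 1 n) (Icc 1 k) s := mem_signedSets.2 ⟨hI.1, hIs, hI.2.trans hIs⟩
  rw [L_eq_signedSets, card_filter_superset_signedSets hI' hsr, card_signedSets,
    card_sdiff_of_subset hfst, hI.2, hIs, Nat.card_Icc, Nat.card_Icc, Nat.add_sub_cancel,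
    Nat.add_sub_cancel]

theorem card_Msig (d : ℕ) : #(Msig d) = d := by
  rw [Msig, card_image_of_injective _ fun x y h => (Prod.ext_iff.1 h).1, Nat.card_Icc,
    Nat.add_sub_cancel]

theorem Msig_mono {c d : ℕ} (h : c ≤ d) : Msig c ⊆ Msig d :=
  image_subset_image (Icc_subset_Icc le_rfl h)

theorem isSigned_of_subset_Msig {n k a : ℕ} (han : a ≤ n) (hk : 1 ≤ k) {I : Finset (ℕ × ℕ)}
    (hI : I ⊆ Msig a) : IsSigned n k I := by
  have hMsig : Msig a ⊆ box n k := by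
    intro p hp
    obtain ⟨x, hx, rfl⟩ := mem_image.1 hp
    have hx := mem_Icc.1 hx
    exact mem_product.2 ⟨mem_Icc.2 ⟨hx.1, hx.2.trans han⟩, mem_Icc.2 ⟨le_rfl, hk⟩⟩
  refine ⟨hI.trans hMsig, card_image_of_injOn fun p hp q hq h => ?_⟩
  obtain ⟨x, -, rfl⟩ := mem_image.1 (hI hp)
  obtain ⟨y, -, rfl⟩ := mem_image.1 (hI hq)
  exact congrArg (·, 1) h

theorem card_inter_Msig {t a : ℕ} {F : Finset (ℕ × ℕ)} (hta : t ≤ a) (hF : Msig t ⊆ F) :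
    #(F ∩ Msig a) = t + #((Msig a \ Msig t) ∩ F) := by
  have hsub : Msig t ⊆ F ∩ Msig a := subset_inter hF (Msig_mono hta)
  have hdiff : (Msig a \ Msig t) ∩ F = (F ∩ Msig a) \ Msig t := by
    ext
    simp only [mem_inter, mem_sdiff]
    tauto
  rw [hdiff, card_sdiff_of_subset hsub, card_Msig,
    Nat.add_sub_cancel' (card_Msig t ▸ card_le_card hsub)]

theorem double_count_second_general (n r k t a : ℕ)
    (hk : 2 ≤ k) (htr : t + 2 ≤ r) (hta : t + 2 ≤ a) (han : a ≤ n) :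
    ∑ i ∈ Finset.Icc 2 (a - t),
        i.choose 2 * ((L n r k).filter (fun F => Msig t ⊆ F ∧ (F ∩ Msig a).card = t + i)).card =
      (a - t).choose 2 * (n - t - 2).choose (r - t - 2) * k ^ (r - t - 2) := by
  set X := Msig a \ Msig t
  have hX : #X = a - t := by
    rw [card_sdiff_of_subset (Msig_mono (by omega)), card_Msig, card_Msig]
  have hlevel (i : ℕ) : {F ∈ L n r k | Msig t ⊆ F ∧ #(F ∩ Msig a) = t + i} =
      {F ∈ {F ∈ L n r k | Msig t ⊆ F} | #(X ∩ F) = i} := by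
    rw [filter_filter]
    refine filter_congr fun F _ => and_congr_right fun hF => ?_
    rw [card_inter_Msig (by omega) hF]
    exact Nat.add_left_cancel_iff
  have hpair (e : Finset (ℕ × ℕ)) (he : e ∈ X.powersetCard 2) :
      #{F ∈ {F ∈ L n r k | Msig t ⊆ F} | e ⊆ F} =
        (n - t - 2).choose (r - t - 2) * k ^ (r - t - 2) := by
    obtain ⟨heX, he2⟩ := mem_powersetCard.1 he
    have hsigned : IsSigned n k (Msig t ∪ e) := isSigned_of_subset_Msig han (by omega)
      (union_subset (Msig_mono (by omega)) (heX.trans sdiff_subset))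
    have hcard : #(Msig t ∪ e) = t + 2 := by
      rw [card_union_of_disjoint (disjoint_of_subset_right heX disjoint_sdiff), card_Msig, he2]
    rw [filter_filter, filter_congr fun F _ => union_subset_iff.symm,
      card_filter_superset_L hsigned hcard htr, Nat.sub_sub, Nat.sub_sub]
  simp_rw [hlevel]
  rw [← hX, sum_Icc_choose_mul_card_filter_card_inter, sum_congr rfl hpair, sum_const,
    card_powersetCard, smul_eq_mul, mul_assoc]

theorem double_count_second (n r k t a : ℕ) (hn : 0 < n) (ht : 0 < t)
    (hk : 2 ≤ k) (htr : t + 2 ≤ r) (hrn : r ≤ n) (hta : t + 2 ≤ a) (han : a ≤ n) :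
    ∑ i ∈ Finset.Icc 2 (a - t),
        i.choose 2 * ((L n r k).filter (fun F => Msig t ⊆ F ∧ (F ∩ Msig a).card = t + i)).card =
      (a - t).choose 2 * (n - t - 2).choose (r - t - 2) * k ^ (r - t - 2) :=
  double_count_second_general n r k t a hk htr hta han
end
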